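/- For finite-dimensional Hilbert spaces H and K and a unit vector ψ ∈ H ⊗ K with Schmidt coefficients (pᵢ), the greatest cross norm of the projection P_ψ equals (∑ᵢ √pᵢ)². -/

import Mathlib

open scoped BigOperators ComplexOrder
open Matrix

noncomputable section

/-- Finite-dimensional complex Hilbert space of dimension `m`. -/
abbrev H (m : ℕ) := EuclideanSpace ℂ (Fin m)

/-- The tensor product `H m ⊗ H n`, realized as `EuclideanSpace ℂ (Fin m × Fin n)`. -/
abbrev HT (m n : ℕ) := EuclideanSpace ℂ (Fin m × Fin n)

/-- Elementary tensor `a ⊗ b`. -/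
def tensorVec {m n : ℕ} (a : H m) (b : H n) : HT m n :=
  WithLp.toLp 2 fun p => a p.1 * b p.2

/-- The projection `|ψ⟩⟨ψ|` as a matrix. -/
def proj {m n : ℕ} (ψ : HT m n) : Matrix (Fin m × Fin n) (Fin m × Fin n) ℂ :=
  Matrix.of fun x y => ψ x * (starRingEnd ℂ) (ψ y)

/-- The projection `|a⟩⟨a|` on a single factor. -/
def proj1 {m : ℕ} (a : H m) : Matrix (Fin m) (Fin m) ℂ :=
  Matrix.of fun i j => a i * (starRingEnd ℂ) (a j)

/-- Partial trace over the second factor. -/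
def ptrace2 {m n : ℕ} (M : Matrix (Fin m × Fin n) (Fin m × Fin n) ℂ) :
    Matrix (Fin m) (Fin m) ℂ :=
  Matrix.of fun i j => ∑ k : Fin n, M (i, k) (j, k)

/-- Partial trace over the first factor. -/
def ptrace1 {m n : ℕ} (M : Matrix (Fin m × Fin n) (Fin m × Fin n) ℂ) :
    Matrix (Fin n) (Fin n) ℂ :=
  Matrix.of fun i j => ∑ k : Fin m, M (k, i) (k, j)

/-- Von Neumann entropy `-Tr(ρ ln ρ)` of a Hermitian matrix, via its eigenvalues. -/
def vnEnt {k : ℕ} {M : Matrix (Fin k) (Fin k) ℂ} (h : M.IsHermitian) : ℝ :=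
  ∑ i, Real.negMulLog (h.eigenvalues i)

/-- Kronecker product of square matrices. -/
def kron {m n : ℕ} (A : Matrix (Fin m) (Fin m) ℂ) (B : Matrix (Fin n) (Fin n) ℂ) :
    Matrix (Fin m × Fin n) (Fin m × Fin n) ℂ :=
  Matrix.of fun p q => A p.1 q.1 * B p.2 q.2

/-- Action of a matrix on a vector. -/
def matVec {m n : ℕ} (M : Matrix (Fin m × Fin n) (Fin m × Fin n) ℂ) (ψ : HT m n) :
    HT m n := WithLp.toLp 2 fun p => ∑ q, M p q * ψ q

/-- The canonical pure state with Schmidt coefficients `μ`. -/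
def stdVec {k : ℕ} (μ : Fin k → ℝ) : HT k k :=
  WithLp.toLp 2 fun p => if p.1 = p.2 then (Real.sqrt (μ p.1) : ℂ) else 0

/-- Strong Schmidt orthogonality: the supports of both reduced density matrices
are orthogonal. -/
def SchmidtOrthogonal {m n : ℕ} (ψ φ : HT m n) : Prop :=
  ptrace2 (proj ψ) * ptrace2 (proj φ) = 0 ∧ ptrace1 (proj ψ) * ptrace1 (proj φ) = 0

/-- Image of `ψ` under the tensor product of two isometric embeddings. -/
def tensorMap {m n m' n' : ℕ} (f : H m →ₗᵢ[ℂ] H m') (g : H n →ₗᵢ[ℂ] H n')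
    (ψ : HT m n) : HT m' n' :=
  WithLp.toLp 2 fun p => ∑ q : Fin m × Fin n,
    ψ q * f (EuclideanSpace.single q.1 1) p.1 * g (EuclideanSpace.single q.2 1) p.2

/-- Finite probability distribution. -/
def IsProbDist {k : ℕ} (p : Fin k → ℝ) : Prop := (∀ i, 0 ≤ p i) ∧ ∑ i, p i = 1

/-- Multiset of nonzero Schmidt coefficients of `ψ` (eigenvalues of the reduced
density matrix). -/
def schmidtMultiset {m n : ℕ} (ψ : HT m n) (h : (ptrace2 (proj ψ)).IsHermitian) :
    Multiset ℝ :=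
  (Finset.univ.val.map h.eigenvalues).filter (· ≠ 0)

/-- Trace norm of a matrix. -/
def trNorm {a b : ℕ} (A : Matrix (Fin a) (Fin b) ℂ) : ℝ :=
  ∑ i, Real.sqrt ((Matrix.posSemidef_conjTranspose_mul_self A).1.eigenvalues i)

/-- The greatest cross norm. -/
def gcn {m n : ℕ} (M : Matrix (Fin m × Fin n) (Fin m × Fin n) ℂ) : ℝ :=
  sInf { t : ℝ | ∃ (k : ℕ) (x : Fin k → Matrix (Fin m) (Fin m) ℂ)
    (y : Fin k → Matrix (Fin n) (Fin n) ℂ),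
    M = ∑ i, kron (x i) (y i) ∧ t = ∑ i, trNorm (x i) * trNorm (y i) }

/-- Density operator. -/
def IsDensity {d : Type*} [Fintype d] [DecidableEq d] (M : Matrix d d ℂ) : Prop :=
  M.PosSemidef ∧ M.trace = 1

/-! Write `ψ = ∑ᵢ √pᵢ aᵢ ⊗ bᵢ`. Expanding `P_ψ = ∑ᵢⱼ √(pᵢpⱼ) |aᵢ⟩⟨aⱼ| ⊗ |bᵢ⟩⟨bⱼ|` gives
`‖P_ψ‖_γ ≤ (∑ᵢ √pᵢ)²`, because `|u⟩⟨v|` has trace norm `‖u‖‖v‖`. Conversely, with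
`Φ = ∑ᵢ aᵢ ⊗ bᵢ` the functional `σ ↦ ⟨Φ, σ Φ⟩` takes the value `|⟨Φ, ψ⟩|² = (∑ᵢ √pᵢ)²` at `P_ψ`,
while at `x ⊗ y` it equals `∑ᵢⱼ ⟨aᵢ, x aⱼ⟩⟨bᵢ, y bⱼ⟩`, which Cauchy–Schwarz and Bessel's inequality
bound by `‖x‖₂‖y‖₂ ≤ ‖x‖₁‖y‖₁`. -/

namespace Matrix.IsHermitian

variable {ι : Type*} [Fintype ι] [DecidableEq ι] {M : Matrix ι ι ℂ}

lemma eigenvalues_mul_self_of_mul_self_eq_smul (hM : M.IsHermitian) {t : ℝ}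
    (hMM : M * M = (t : ℂ) • M) (i : ι) :
    hM.eigenvalues i * hM.eigenvalues i = t * hM.eigenvalues i := by
  have hv : ⇑(hM.eigenvectorBasis i) ≠ 0 :=
    (WithLp.ofLp_eq_zero 2).ne.2 (hM.eigenvectorBasis.orthonormal.ne_zero i)
  have h := congrArg (· *ᵥ ⇑(hM.eigenvectorBasis i)) hMM
  simp only [← mulVec_mulVec, smul_mulVec, hM.mulVec_eigenvectorBasis,
    mulVec_smul, smul_smul, Complex.coe_smul] at h
  exact smul_left_injective ℝ hv h

lemma sum_sqrt_eigenvalues_of_mul_self_eq_smul (hM : M.IsHermitian) {t : ℝ} (ht : 0 ≤ t)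
    (hMM : M * M = (t : ℂ) • M) (htr : M.trace = t) :
    ∑ i, √(hM.eigenvalues i) = √t := by
  have hsum : ∑ i, hM.eigenvalues i = t := by
    have := hM.trace_eq_sum_eigenvalues.symm.trans htr
    exact Complex.ofReal_injective (by simpa using this)
  have hsq := hM.eigenvalues_mul_self_of_mul_self_eq_smul hMM
  have hterm : ∀ i, √(hM.eigenvalues i) * √t = hM.eigenvalues i := by
    intro i
    rcases mul_eq_mul_right_iff.mp (hsq i) with h | h
    · rw [h, Real.mul_self_sqrt ht]
    · simp [h]
  rcases ht.eq_or_lt with rfl | ht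
  · have hzero : ∀ i, hM.eigenvalues i = 0 := fun i => by simpa using (hterm i).symm
    simp [hzero]
  · apply mul_right_cancel₀ (Real.sqrt_pos.2 ht).ne'
    rw [Finset.sum_mul, Finset.sum_congr rfl fun i _ => hterm i, hsum, Real.mul_self_sqrt ht.le]

end Matrix.IsHermitian

lemma EuclideanSpace.star_dotProduct_self {ι : Type*} [Fintype ι] (u : EuclideanSpace ℂ ι) :
    star ⇑u ⬝ᵥ ⇑u = (‖u‖ ^ 2 : ℂ) := by
  rw [dotProduct_comm, ← EuclideanSpace.inner_eq_star_dotProduct, inner_self_eq_norm_sq_to_K]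
  rfl

lemma vecMulVec_star_mul_vecMulVec {ι κ ν : Type*} [Fintype ι] (w : κ → ℂ)
    (u : EuclideanSpace ℂ ι) (v : ν → ℂ) :
    vecMulVec w (star ⇑u) * vecMulVec ⇑u v = (‖u‖ ^ 2 : ℂ) • vecMulVec w v := by
  rw [vecMulVec_mul_vecMulVec, EuclideanSpace.star_dotProduct_self, vecMulVec_smul]

lemma trNorm_nonneg {a b : ℕ} (A : Matrix (Fin a) (Fin b) ℂ) : 0 ≤ trNorm A :=
  Finset.sum_nonneg fun _ _ => Real.sqrt_nonneg _

lemma trNorm_vecMulVec {a b : ℕ} (u : H a) (v : H b) :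
    trNorm (vecMulVec ⇑u (star ⇑v)) = ‖u‖ * ‖v‖ := by
  have hAA : (vecMulVec ⇑u (star ⇑v))ᴴ * vecMulVec ⇑u (star ⇑v) =
      (‖u‖ ^ 2 : ℂ) • vecMulVec ⇑v (star ⇑v) := by
    rw [conjTranspose_vecMulVec, star_star, vecMulVec_star_mul_vecMulVec]
  have hsq := (posSemidef_conjTranspose_mul_self (vecMulVec ⇑u (star ⇑v))).isHermitian
    |>.sum_sqrt_eigenvalues_of_mul_self_eq_smul (t := ‖u‖ ^ 2 * ‖v‖ ^ 2) (by positivity) ?_ ?_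
  · rw [trNorm, hsq, Real.sqrt_mul (by positivity), Real.sqrt_sq (norm_nonneg _),
      Real.sqrt_sq (norm_nonneg _)]
  · rw [hAA, smul_mul_smul_comm, vecMulVec_star_mul_vecMulVec, smul_smul, smul_smul]
    congr 1
    push_cast
    ring
  · rw [hAA, trace_smul, trace_vecMulVec, dotProduct_comm, EuclideanSpace.star_dotProduct_self]
    push_cast; ring

lemma trace_conjTranspose_mul_self_eq_sum_norm_sq {ι κ : Type*} [Fintype ι] [Fintype κ]
    (A : Matrix ι κ ℂ) : (Aᴴ * A).trace = ((∑ i, ∑ j, ‖A i j‖ ^ 2 : ℝ) : ℂ) := by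
  simp only [trace, diag_apply, mul_apply, conjTranspose_apply, RCLike.star_def,
    Complex.conj_mul', Complex.ofReal_sum, Complex.ofReal_pow]
  exact Finset.sum_comm

lemma sqrt_sum_norm_sq_le_trNorm {a b : ℕ} (A : Matrix (Fin a) (Fin b) ℂ) :
    √(∑ i, ∑ j, ‖A i j‖ ^ 2) ≤ trNorm A := by
  have hA := posSemidef_conjTranspose_mul_self A
  have hsum : ∑ i, hA.isHermitian.eigenvalues i = ∑ i, ∑ j, ‖A i j‖ ^ 2 := by
    have := hA.isHermitian.trace_eq_sum_eigenvalues.symm.trans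
      (trace_conjTranspose_mul_self_eq_sum_norm_sq A)
    exact Complex.ofReal_injective (by simpa using this)
  rw [← hsum, Real.sqrt_le_iff]
  refine ⟨trNorm_nonneg A, ?_⟩
  calc ∑ i, hA.isHermitian.eigenvalues i = ∑ i, √(hA.isHermitian.eigenvalues i) ^ 2 :=
        Finset.sum_congr rfl fun i _ => (Real.sq_sqrt (hA.eigenvalues_nonneg i)).symm
    _ ≤ trNorm A ^ 2 := Finset.sum_sq_le_sq_sum_of_nonneg fun i _ => Real.sqrt_nonneg _

open scoped Kronecker

section GreatestCrossNorm

variable {m n : ℕ}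

lemma kron_eq_kronecker (A : Matrix (Fin m) (Fin m) ℂ) (B : Matrix (Fin n) (Fin n) ℂ) :
    kron A B = A ⊗ₖ B :=
  rfl

lemma gcn_le_of_eq_sum_kron {ι : Type*} [Fintype ι]
    {M : Matrix (Fin m × Fin n) (Fin m × Fin n) ℂ}
    (x : ι → Matrix (Fin m) (Fin m) ℂ) (y : ι → Matrix (Fin n) (Fin n) ℂ)
    (hM : M = ∑ i, kron (x i) (y i)) : gcn M ≤ ∑ i, trNorm (x i) * trNorm (y i) := by
  let e := Fintype.equivFin ι
  refine csInf_le ⟨0, ?_⟩ ⟨_, x ∘ e.symm, y ∘ e.symm, ?_, ?_⟩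
  · rintro _ ⟨K, x, y, -, rfl⟩
    exact Finset.sum_nonneg fun i _ => mul_nonneg (trNorm_nonneg _) (trNorm_nonneg _)
  · rw [hM, ← e.symm.sum_comp]; rfl
  · rw [← e.symm.sum_comp]; rfl

lemma exists_eq_sum_kron (M : Matrix (Fin m × Fin n) (Fin m × Fin n) ℂ) :
    ∃ (K : ℕ) (x : Fin K → Matrix (Fin m) (Fin m) ℂ) (y : Fin K → Matrix (Fin n) (Fin n) ℂ),
      M = ∑ i, kron (x i) (y i) := by
  let e := Fintype.equivFin ((Fin m × Fin n) × (Fin m × Fin n))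
  refine ⟨_, fun i => single (e.symm i).1.1 (e.symm i).2.1 (M (e.symm i).1 (e.symm i).2),
    fun i => single (e.symm i).1.2 (e.symm i).2.2 1, ?_⟩
  simp only [kron_eq_kronecker, single_kronecker_single, mul_one]
  rw [e.symm.sum_comp (fun P => single P.1 P.2 (M P.1 P.2)), Fintype.sum_prod_type]
  exact matrix_eq_sum_single M

lemma norm_le_gcn (F : Matrix (Fin m × Fin n) (Fin m × Fin n) ℂ →+ ℂ)
    (hF : ∀ x y, ‖F (kron x y)‖ ≤ trNorm x * trNorm y)
    (M : Matrix (Fin m × Fin n) (Fin m × Fin n) ℂ) :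
    ‖F M‖ ≤ gcn M := by
  obtain ⟨K, x, y, hM⟩ := exists_eq_sum_kron M
  refine le_csInf ⟨_, K, x, y, hM, rfl⟩ ?_
  rintro _ ⟨K, x, y, rfl, rfl⟩
  rw [map_sum]
  exact (norm_sum_le _ _).trans (Finset.sum_le_sum fun i _ => hF (x i) (y i))

end GreatestCrossNorm

namespace Orthonormal

variable {ι ι' κ : Type*} [Fintype ι] [Fintype ι'] [Fintype κ] {a : κ → EuclideanSpace ℂ ι}

lemma sum_norm_sq_mulVec_le (ha : Orthonormal ℂ a) (x : Matrix ι' ι ℂ) :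
    ∑ j, ∑ s, ‖(x *ᵥ ⇑(a j)) s‖ ^ 2 ≤ ∑ s, ∑ t, ‖x s t‖ ^ 2 := by
  rw [Finset.sum_comm]
  refine Finset.sum_le_sum fun s _ => ?_
  have hrow : ∀ j, (x *ᵥ ⇑(a j)) s = inner ℂ (WithLp.toLp 2 (star (x s))) (a j) := by
    intro j
    rw [EuclideanSpace.inner_eq_star_dotProduct, WithLp.ofLp_toLp, star_star, dotProduct_comm]
    rfl
  calc ∑ j, ‖(x *ᵥ ⇑(a j)) s‖ ^ 2
      = ∑ j, ‖inner ℂ (a j) (WithLp.toLp 2 (star (x s)))‖ ^ 2 := by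
        simp only [hrow, norm_inner_symm]
    _ ≤ ‖WithLp.toLp 2 (star (x s))‖ ^ 2 := ha.sum_inner_products_le _
    _ = ∑ t, ‖x s t‖ ^ 2 := by simp [EuclideanSpace.norm_sq_eq]

lemma sum_norm_sq_star_dotProduct_mulVec_le (ha : Orthonormal ℂ a) (x : Matrix ι ι ℂ) :
    ∑ i, ∑ j, ‖star ⇑(a i) ⬝ᵥ x *ᵥ ⇑(a j)‖ ^ 2 ≤ ∑ s, ∑ t, ‖x s t‖ ^ 2 := by
  have hcol : ∀ i j,
      star ⇑(a i) ⬝ᵥ x *ᵥ ⇑(a j) = inner ℂ (a i) (WithLp.toLp 2 (x *ᵥ ⇑(a j))) := by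
    intro i j
    rw [EuclideanSpace.inner_eq_star_dotProduct, WithLp.ofLp_toLp, dotProduct_comm]
  calc ∑ i, ∑ j, ‖star ⇑(a i) ⬝ᵥ x *ᵥ ⇑(a j)‖ ^ 2
      = ∑ j, ∑ i, ‖inner ℂ (a i) (WithLp.toLp 2 (x *ᵥ ⇑(a j)))‖ ^ 2 := by
        rw [Finset.sum_comm]; simp only [hcol]
    _ ≤ ∑ j, ‖WithLp.toLp 2 (x *ᵥ ⇑(a j))‖ ^ 2 :=
        Finset.sum_le_sum fun j _ => ha.sum_inner_products_le _
    _ = ∑ j, ∑ s, ‖(x *ᵥ ⇑(a j)) s‖ ^ 2 := by simp [EuclideanSpace.norm_sq_eq]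
    _ ≤ ∑ s, ∑ t, ‖x s t‖ ^ 2 := ha.sum_norm_sq_mulVec_le x

end Orthonormal

section Tensor

variable {m n : ℕ}

lemma inner_tensorVec (a a' : H m) (b b' : H n) :
    inner ℂ (tensorVec a b) (tensorVec a' b') = inner ℂ a a' * inner ℂ b b' := by
  simp only [EuclideanSpace.inner_eq_star_dotProduct, tensorVec, dotProduct, Pi.star_apply,
    star_mul', Fintype.sum_prod_type, Finset.sum_mul_sum]
  refine Finset.sum_congr rfl fun s _ => Finset.sum_congr rfl fun t _ => ?_
  ring

lemma Orthonormal.tensorVec {ι : Type*} {a : ι → H m} {b : ι → H n} (ha : Orthonormal ℂ a)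
    (hb : Orthonormal ℂ b) : Orthonormal ℂ fun i => tensorVec (a i) (b i) := by
  classical
  rw [orthonormal_iff_ite] at *
  intro i j
  rw [inner_tensorVec, ha, hb]
  split_ifs <;> simp

lemma tensorVec_smul_left (c : ℂ) (a : H m) (b : H n) :
    tensorVec (c • a) b = c • tensorVec a b := by
  ext p
  simp [tensorVec, mul_assoc]

lemma kron_vecMulVec (u u' : H m) (v v' : H n) :
    kron (vecMulVec ⇑u (star ⇑u')) (vecMulVec ⇑v (star ⇑v')) =
      vecMulVec ⇑(tensorVec u v) (star ⇑(tensorVec u' v')) := by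
  ext P Q
  simp only [kron, vecMulVec, tensorVec, of_apply, Pi.star_apply, star_mul']
  ring

lemma proj_sum_tensorVec {ι : Type*} [Fintype ι] (u : ι → H m) (v : ι → H n) :
    proj (∑ i, tensorVec (u i) (v i)) =
      ∑ ij : ι × ι, kron (vecMulVec ⇑(u ij.1) (star ⇑(u ij.2)))
        (vecMulVec ⇑(v ij.1) (star ⇑(v ij.2))) := by
  simp only [kron_vecMulVec]
  ext P Q
  simp only [proj, vecMulVec, of_apply, Matrix.sum_apply, WithLp.ofLp_sum, Finset.sum_apply,
    Pi.star_apply, map_sum, Finset.sum_mul_sum, Fintype.sum_prod_type]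
  rfl

lemma kron_mulVec_tensorVec (x : Matrix (Fin m) (Fin m) ℂ) (y : Matrix (Fin n) (Fin n) ℂ)
    (a : H m) (b : H n) :
    kron x y *ᵥ ⇑(tensorVec a b) =
      ⇑(tensorVec (WithLp.toLp 2 (x *ᵥ ⇑a)) (WithLp.toLp 2 (y *ᵥ ⇑b))) := by
  ext p
  simp only [tensorVec, kron, mulVec, dotProduct, of_apply, Fintype.sum_prod_type,
    Finset.sum_mul_sum]
  refine Finset.sum_congr rfl fun s _ => Finset.sum_congr rfl fun t _ => ?_
  ring

lemma star_tensorVec_dotProduct_kron_mulVec (a a' : H m) (b b' : H n)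
    (x : Matrix (Fin m) (Fin m) ℂ) (y : Matrix (Fin n) (Fin n) ℂ) :
    star ⇑(tensorVec a b) ⬝ᵥ kron x y *ᵥ ⇑(tensorVec a' b') =
      (star ⇑a ⬝ᵥ x *ᵥ ⇑a') * (star ⇑b ⬝ᵥ y *ᵥ ⇑b') := by
  have h := inner_tensorVec a (WithLp.toLp 2 (x *ᵥ ⇑a')) b (WithLp.toLp 2 (y *ᵥ ⇑b'))
  simp only [EuclideanSpace.inner_eq_star_dotProduct] at h
  rw [kron_mulVec_tensorVec, dotProduct_comm, h, dotProduct_comm, dotProduct_comm (y *ᵥ _)]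

end Tensor

section Bounds

variable {m n : ℕ}

lemma gcn_proj_sum_tensorVec_le {ι : Type*} [Fintype ι] (u : ι → H m) (v : ι → H n) :
    gcn (proj (∑ i, tensorVec (u i) (v i))) ≤ (∑ i, ‖u i‖ * ‖v i‖) ^ 2 := by
  refine (gcn_le_of_eq_sum_kron _ _ (proj_sum_tensorVec u v)).trans_eq ?_
  simp only [trNorm_vecMulVec, sq, Finset.sum_mul_sum, Fintype.sum_prod_type]
  refine Finset.sum_congr rfl fun i _ => Finset.sum_congr rfl fun j _ => ?_
  ring

lemma norm_sum_mul_le_sqrt_mul_sqrt {ι : Type*} (s : Finset ι) (A B : ι → ℂ) :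
    ‖∑ i ∈ s, A i * B i‖ ≤ √(∑ i ∈ s, ‖A i‖ ^ 2) * √(∑ i ∈ s, ‖B i‖ ^ 2) :=
  (norm_sum_le _ _).trans <| by
    simpa only [norm_mul] using Real.sum_mul_le_sqrt_mul_sqrt s (‖A ·‖) (‖B ·‖)

variable {ι : Type*} [Fintype ι] {a : ι → H m} {b : ι → H n}

lemma norm_star_dotProduct_kron_mulVec_le (ha : Orthonormal ℂ a) (hb : Orthonormal ℂ b)
    (x : Matrix (Fin m) (Fin m) ℂ) (y : Matrix (Fin n) (Fin n) ℂ) :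
    ‖star ⇑(∑ i, tensorVec (a i) (b i)) ⬝ᵥ kron x y *ᵥ ⇑(∑ i, tensorVec (a i) (b i))‖ ≤
      trNorm x * trNorm y := by
  have hexpand :
      star ⇑(∑ i, tensorVec (a i) (b i)) ⬝ᵥ kron x y *ᵥ ⇑(∑ i, tensorVec (a i) (b i)) =
        ∑ ij : ι × ι, (star ⇑(a ij.1) ⬝ᵥ x *ᵥ ⇑(a ij.2)) * (star ⇑(b ij.1) ⬝ᵥ y *ᵥ ⇑(b ij.2)) := by
    simp only [WithLp.ofLp_sum, star_sum, mulVec_sum, sum_dotProduct, dotProduct_sum,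
      star_tensorVec_dotProduct_kron_mulVec, Fintype.sum_prod_type]
    exact Finset.sum_comm
  rw [hexpand]
  refine (norm_sum_mul_le_sqrt_mul_sqrt _ _ _).trans ?_
  simp only [Fintype.sum_prod_type]
  exact mul_le_mul
    ((Real.sqrt_le_sqrt (ha.sum_norm_sq_star_dotProduct_mulVec_le x)).trans
      (sqrt_sum_norm_sq_le_trNorm x))
    ((Real.sqrt_le_sqrt (hb.sum_norm_sq_star_dotProduct_mulVec_le y)).trans
      (sqrt_sum_norm_sq_le_trNorm y))
    (Real.sqrt_nonneg _) (trNorm_nonneg x)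

lemma norm_inner_sq_le_gcn_proj (ha : Orthonormal ℂ a) (hb : Orthonormal ℂ b) (ψ : HT m n) :
    ‖inner ℂ (∑ i, tensorVec (a i) (b i)) ψ‖ ^ 2 ≤ gcn (proj ψ) := by
  set Φ := ∑ i, tensorVec (a i) (b i)
  let F : Matrix (Fin m × Fin n) (Fin m × Fin n) ℂ →+ ℂ :=
    AddMonoidHom.mk' (fun σ => star ⇑Φ ⬝ᵥ σ *ᵥ ⇑Φ) fun σ τ => by
      simp only [add_mulVec, dotProduct_add]
  have hF : F (proj ψ) = (‖inner ℂ Φ ψ‖ ^ 2 : ℂ) := by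
    change star ⇑Φ ⬝ᵥ vecMulVec ⇑ψ (star ⇑ψ) *ᵥ ⇑Φ = _
    rw [vecMulVec_mulVec, op_smul_eq_smul, dotProduct_smul, smul_eq_mul, ← Complex.conj_mul']
    rw [inner_conj_symm, EuclideanSpace.inner_eq_star_dotProduct,
      EuclideanSpace.inner_eq_star_dotProduct, dotProduct_comm Φ.ofLp, dotProduct_comm ψ.ofLp]
  calc ‖inner ℂ Φ ψ‖ ^ 2 = ‖F (proj ψ)‖ := by
        rw [hF, ← Complex.ofReal_pow, Complex.norm_real, Real.norm_of_nonneg (sq_nonneg _)]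
    _ ≤ gcn (proj ψ) := norm_le_gcn F (norm_star_dotProduct_kron_mulVec_le ha hb) _

end Bounds

theorem gcn_of_pure_state_general {m n k : ℕ} (ψ : HT m n)
    (p : Fin k → ℝ) (a : Fin k → H m) (b : Fin k → H n)
    (ha : Orthonormal ℂ a) (hb : Orthonormal ℂ b)
    (hdecomp : ψ = ∑ i, (Real.sqrt (p i) : ℂ) • tensorVec (a i) (b i)) :
    gcn (proj ψ) = (∑ i, Real.sqrt (p i)) ^ 2 := by
  have hψ : ψ = ∑ i, tensorVec ((√(p i) : ℂ) • a i) (b i) := by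
    simp only [hdecomp, tensorVec_smul_left]
  have hinner : inner ℂ (∑ i, tensorVec (a i) (b i)) ψ = ∑ i, (√(p i) : ℂ) := by
    rw [hdecomp, sum_inner]
    exact Finset.sum_congr rfl fun i _ => (ha.tensorVec hb).inner_right_fintype _ i
  apply le_antisymm
  · calc gcn (proj ψ) ≤ (∑ i, ‖(√(p i) : ℂ) • a i‖ * ‖b i‖) ^ 2 :=
          hψ ▸ gcn_proj_sum_tensorVec_le _ _
      _ = (∑ i, √(p i)) ^ 2 := by
          simp [norm_smul, ha.1, hb.1, abs_of_nonneg (Real.sqrt_nonneg _)]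
  · calc (∑ i, √(p i)) ^ 2 = ‖inner ℂ (∑ i, tensorVec (a i) (b i)) ψ‖ ^ 2 := by
          rw [hinner, ← Complex.ofReal_sum, Complex.norm_real, Real.norm_eq_abs, sq_abs]
      _ ≤ gcn (proj ψ) := norm_inner_sq_le_gcn_proj ha hb ψ

/-- The greatest cross norm of a pure state projection equals `(∑ √pᵢ)²` in terms
of the Schmidt coefficients. -/
theorem gcn_of_pure_state {m n k : ℕ} (ψ : HT m n) (hψ : ‖ψ‖ = 1)
    (p : Fin k → ℝ) (a : Fin k → H m) (b : Fin k → H n)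
    (ha : Orthonormal ℂ a) (hb : Orthonormal ℂ b) (hp : ∀ i, 0 ≤ p i)
    (hdecomp : ψ = ∑ i, (Real.sqrt (p i) : ℂ) • tensorVec (a i) (b i)) :
    gcn (proj ψ) = (∑ i, Real.sqrt (p i)) ^ 2 :=
  gcn_of_pure_state_general ψ p a b ha hb hdecomp

end
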